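/- Let V be an n-dimensional vector space, n ≥ 2, over a division ring R such that for any two n-simplices {P₁,…,P_{n+1}} and {P'₁,…,P'_{n+1}} in P(V) there is a unique element of PGL(V) with Pᵢ ↦ P'ᵢ for all i. Then R is commutative. -/

import Mathlib

/-- A finite set of lines is *independent* if some choice of nonzero representative
vectors is linearly independent. -/
def IndepLines (K : Type*) {V : Type*} [DivisionRing K] [AddCommGroup V] [Module K V]
    (𝒳 : Set (Submodule K V)) : Prop :=
  ∃ x : 𝒳 → V, (∀ P : 𝒳, x P ∈ (P : Submodule K V) ∧ x P ≠ 0) ∧ LinearIndependent K x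

/-- An `(m+1)`-element subset of `P(V)` is an *`m`-simplex` if it is not independent
but every `m`-element subset of it is independent. -/
def IsSimplex (K : Type*) {V : Type*} [DivisionRing K] [AddCommGroup V] [Module K V]
    (m : ℕ) (𝒳 : Set (Submodule K V)) : Prop :=
  𝒳.Finite ∧ 𝒳.ncard = m + 1 ∧ (∀ P ∈ 𝒳, Module.finrank K P = 1) ∧
    ¬ IndepLines K 𝒳 ∧ ∀ 𝒴 ⊆ 𝒳, 𝒴.ncard = m → IndepLines K 𝒴

/-! The scalar dilation `e i ↦ b • e i` with respect to a basis `e` fixes every point of the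
standard simplex `⟨e 0⟩, …, ⟨e (n-1)⟩, ⟨e 0 + ⋯ + e (n-1)⟩`, and so does the identity. By
uniqueness the two induce the same projectivity, so the dilation fixes the line through
`e 0 + a • e 1`. Its image `b • e 0 + (a * b) • e 1` is then a left multiple of
`e 0 + a • e 1`, and comparing coordinates gives `a * b = b * a`. -/

open Module Submodule

section

variable {K V : Type*} [DivisionRing K] [AddCommGroup V] [Module K V]

theorem IndepLines.ncard_le_finrank [FiniteDimensional K V] {𝒳 : Set (Submodule K V)}
    (h : IndepLines K 𝒳) : 𝒳.ncard ≤ finrank K V := by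
  obtain ⟨x, -, hx⟩ := h
  have := hx.finite
  have := Fintype.ofFinite 𝒳
  rw [← Nat.card_coe_set_eq, Nat.card_eq_fintype_card]
  exact hx.fintype_card_le_finrank

theorem indepLines_image_span_singleton {ι : Type*} {v : ι → V} {s : Set ι}
    (hv : LinearIndepOn K v s) (hP : Function.Injective fun i => K ∙ v i) :
    IndepLines K ((fun i => K ∙ v i) '' s) := by
  let φ := Equiv.Set.image _ s hP
  refine ⟨fun Q => v (φ.symm Q), fun Q => ⟨?_, hv.ne_zero (φ.symm Q).2⟩,
    hv.comp φ.symm φ.symm.injective⟩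
  obtain ⟨i, rfl⟩ := φ.surjective Q
  simp [φ, mem_span_singleton_self]

theorem injective_span_singleton_of_linearIndepOn_compl {n : ℕ} (h2 : 2 ≤ n)
    {v : Fin (n + 1) → V} (hv : ∀ j, LinearIndepOn K v {j}ᶜ) :
    Function.Injective fun i => K ∙ v i := by
  intro i j (hij : K ∙ v i = K ∙ v j)
  by_contra hne
  obtain ⟨l, hli, hlj⟩ := Fin.exists_ne_and_ne_of_two_lt i j (by omega)
  have hind : LinearIndepOn K v {i, j} := (hv l).mono (by simp [hli, hlj])
  have := hind.notMem_span_of_insert (s := {j}) hne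
  rw [Set.image_singleton] at this
  exact this (hij ▸ mem_span_singleton_self (v i))

theorem isSimplex_range_span_singleton [FiniteDimensional K V] {n : ℕ}
    (hn : finrank K V = n) (h2 : 2 ≤ n) {v : Fin (n + 1) → V}
    (hv : ∀ j, LinearIndepOn K v {j}ᶜ) : IsSimplex K n (Set.range fun i => K ∙ v i) := by
  have hP := injective_span_singleton_of_linearIndepOn_compl h2 hv
  have hcard : (Set.range fun i => K ∙ v i).ncard = n + 1 := by
    rw [Set.ncard_range_of_injective hP, Nat.card_eq_fintype_card, Fintype.card_fin]
  refine ⟨Set.finite_range _, hcard, ?_, fun h => ?_, fun 𝒴 h𝒴 h𝒴card => ?_⟩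
  · rintro _ ⟨i, rfl⟩
    obtain ⟨j, hj, -⟩ := Fin.exists_ne_and_ne_of_two_lt i i (by omega)
    exact finrank_span_singleton ((hv j).ne_zero hj.symm)
  · have := h.ncard_le_finrank
    omega
  · rw [← Set.image_preimage_eq_of_subset h𝒴] at h𝒴card ⊢
    rw [Set.ncard_image_of_injective _ hP] at h𝒴card
    obtain ⟨j, hj⟩ : ∃ j, j ∉ (fun i => K ∙ v i) ⁻¹' 𝒴 := by
      by_contra! h
      rw [Set.eq_univ_of_forall h, Set.ncard_univ, Nat.card_eq_fintype_card,
        Fintype.card_fin] at h𝒴card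
      omega
    exact indepLines_image_span_singleton ((hv j).mono fun i hi hij => hj (hij ▸ hi)) hP

namespace Module.Basis

section Dilation

variable {ι : Type*} (e : Basis ι K V)

/-- The automorphism `e i ↦ c • e i`. Unless `c` is central it is not scalar multiplication:
it moves the line through `e i + a • e j` when `a` does not commute with `c`. -/
noncomputable def dilation (c : Kˣ) : V ≃ₗ[K] V :=
  e.equiv (e.unitsSMul fun _ => c) (Equiv.refl ι)

theorem dilation_apply (c : Kˣ) (i : ι) : e.dilation c (e i) = (c : K) • e i := by
  simp [dilation, equiv_apply, unitsSMul_apply, Units.smul_def]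

theorem mul_comm_of_map_dilation_span_eq {i j : ι} (hij : i ≠ j) (c : Kˣ) (a : K)
    (h : (K ∙ (e i + a • e j)).map (e.dilation c : V →ₗ[K] V) = K ∙ (e i + a • e j)) :
    a * c = c * a := by
  have hmem : (c : K) • e i + (a * c) • e j ∈ K ∙ (e i + a • e j) := by
    rw [← h]
    exact ⟨e i + a • e j, mem_span_singleton_self _, by simp [dilation_apply, smul_smul]⟩
  obtain ⟨r, hr⟩ := mem_span_singleton.1 hmem
  have hi := congrArg (fun w => e.repr w i) hr
  have hj := congrArg (fun w => e.repr w j) hr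
  simp [smul_smul, hij, hij.symm] at hi hj
  rw [← hj, hi]

end Dilation

variable {n : ℕ} (e : Basis (Fin n) K V)

noncomputable def simplexVec : Fin (n + 1) → V :=
  Fin.snoc (α := fun _ => V) e (∑ i, e i)

theorem span_simplexVec_compl (j : Fin (n + 1)) :
    span K (e.simplexVec '' {j}ᶜ) = ⊤ := by
  have hmem : ∀ k, k ≠ j → e.simplexVec k ∈ span K (e.simplexVec '' {j}ᶜ) :=
    fun k hk => subset_span ⟨k, hk, rfl⟩
  rw [eq_top_iff, ← e.span_eq, span_le]
  rintro _ ⟨i, rfl⟩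
  by_cases hi : i.castSucc = j
  · have hsum : e i = e.simplexVec (Fin.last n) -
        ∑ k ∈ Finset.univ.erase i, e.simplexVec k.castSucc := by
      simp only [simplexVec, Fin.snoc_last, Fin.snoc_castSucc]
      exact eq_sub_of_add_eq (Finset.add_sum_erase _ _ (Finset.mem_univ i))
    rw [hsum]
    refine sub_mem (hmem _ (hi ▸ (Fin.castSucc_lt_last i).ne')) (sum_mem fun k hk => hmem _ ?_)
    rw [← hi]
    exact Fin.castSucc_injective _ |>.ne (Finset.ne_of_mem_erase hk)
  · simpa [simplexVec] using hmem _ hi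

theorem linearIndepOn_simplexVec_compl (j : Fin (n + 1)) :
    LinearIndepOn K e.simplexVec {j}ᶜ := by
  apply linearIndependent_of_top_le_span_of_card_eq_finrank
  · rw [← Set.image_eq_range, e.span_simplexVec_compl]
  · simp [finrank_eq_card_basis e, Finset.filter_ne', Finset.card_erase_of_mem]

theorem dilation_simplexVec (c : Kˣ) (i : Fin (n + 1)) :
    e.dilation c (e.simplexVec i) = (c : K) • e.simplexVec i := by
  induction i using Fin.lastCases with
  | last => simp [simplexVec, map_sum, dilation_apply, Finset.smul_sum]
  | cast i => simp [simplexVec, dilation_apply]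

theorem map_dilation_span_simplexVec (c : Kˣ) (i : Fin (n + 1)) :
    (K ∙ e.simplexVec i).map (e.dilation c : V →ₗ[K] V) = K ∙ e.simplexVec i := by
  rw [map_span, Set.image_singleton, LinearEquiv.coe_coe, dilation_simplexVec,
    span_singleton_smul_eq c.isUnit]

end Module.Basis

end

/-- Proposition 1, converse: If for any two `n`-simplices in `P(V)`
there is a unique element of `PGL(V)` matching them up, then the division ring of
scalars is commutative. -/
theorem stmt12 {K V : Type*} [DivisionRing K] [AddCommGroup V] [Module K V]
    [FiniteDimensional K V] {n : ℕ} (hn : Module.finrank K V = n) (h2 : 2 ≤ n)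
    (huniq : ∀ P P' : Fin (n + 1) → Submodule K V,
      Function.Injective P → Function.Injective P' →
      IsSimplex K n (Set.range P) → IsSimplex K n (Set.range P') →
      ∃ u : V ≃ₗ[K] V,
        (∀ i, Submodule.map (u : V →ₗ[K] V) (P i) = P' i) ∧
        ∀ u' : V ≃ₗ[K] V, (∀ i, Submodule.map (u' : V →ₗ[K] V) (P i) = P' i) →
          ∀ L : Submodule K V, Module.finrank K L = 1 →
            Submodule.map (u' : V →ₗ[K] V) L = Submodule.map (u : V →ₗ[K] V) L) :
    ∀ a b : K, a * b = b * a := by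
  intro a b
  rcases eq_or_ne b 0 with rfl | hb
  · simp
  let e : Basis (Fin n) K V := (Module.finBasis K V).reindex (finCongr hn)
  have hv := e.linearIndepOn_simplexVec_compl
  have hP := injective_span_singleton_of_linearIndepOn_compl h2 hv
  have hsimplex := isSimplex_range_span_singleton hn h2 hv
  obtain ⟨u, -, hu⟩ := huniq _ _ hP hP hsimplex hsimplex
  have hfix : ∀ (c : Kˣ) (L : Submodule K V), finrank K L = 1 →
      L.map (e.dilation c : V →ₗ[K] V) = L := fun c L hL => by
    rw [hu _ (e.map_dilation_span_simplexVec c) L hL,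
      ← hu (LinearEquiv.refl K V) (fun i => map_id _) L hL, LinearEquiv.refl_toLinearMap,
      map_id]
  let i₀ : Fin n := ⟨0, by omega⟩
  let i₁ : Fin n := ⟨1, by omega⟩
  have hi : i₀ ≠ i₁ := by simp [i₀, i₁, Fin.ext_iff]
  have hne : e i₀ + a • e i₁ ≠ 0 := fun h => by
    simpa [hi, hi.symm] using congrArg (fun w => e.repr w i₀) h
  exact e.mul_comm_of_map_dilation_span_eq hi (Units.mk0 b hb) a
    (hfix _ _ (finrank_span_singleton hne))
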